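/- The billiards permutation of a generalized grid polygon has no fixed points and no 2-cycles; that is, every cycle of the billiards permutation has length at least 3. -/

import Mathlib

/-!
Formalization of generalized grid polygons (abstract simplicial complexes with a simplicial
map to the triangular grid) and their billiards permutations, following Defant–Jiradilok
and the paper "Triangular-Grid Billiards and Plabic Graphs".

Lattice coordinates: the pair `(a, b) : ℤ × ℤ` represents the planar point
`a•(1,0) + b•(1/2, √3/2)` of the triangular grid `T`.

A generalized grid polygon is encoded by a vertex count `n : ℕ`, a finite set
`F : Finset (Finset (Fin n))` of simplices (nonempty subsets of the vertex set), and a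
vertex map `f : Fin n → ℤ × ℤ` to the grid; the predicate `IsGGP` collects all the axioms.
-/

noncomputable section
open scoped Classical

/-- Lattice coordinates for vertices of the triangular grid. -/
abbrev GridV : Type := ℤ × ℤ

/-- A unit grid triangle.  An upward triangle with base point `v` has vertices
`v, v+(1,0), v+(0,1)`; a downward one has vertices `v+(1,0), v+(0,1), v+(1,1)`. -/
structure GCell where
  base : GridV
  up : Bool
deriving DecidableEq

def GCell.vertexSet (c : GCell) : Finset GridV :=
  if c.up then {c.base, c.base + (1, 0), c.base + (0, 1)}
  else {c.base + (1, 0), c.base + (0, 1), c.base + (1, 1)}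

/-- `s` is the vertex set of a 2-simplex (unit triangle) of the triangular grid. -/
def IsGridCellSet (s : Finset GridV) : Prop := ∃ c : GCell, s = c.vertexSet

/-- `s` is the vertex set of a 1-simplex (pane) of the triangular grid. -/
def IsGridPaneSet (s : Finset GridV) : Prop :=
  ∃ v : GridV, s = {v, v + (1, 0)} ∨ s = {v, v + (0, 1)} ∨ s = {v, v + (-1, 1)}

variable {n : ℕ}

/-- The 2-simplices of the complex. -/
def faces2 (F : Finset (Finset (Fin n))) : Finset (Finset (Fin n)) :=
  F.filter fun t => t.card = 3

/-- A 1-simplex lying on the boundary: it is contained in exactly one 2-simplex. -/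
def isBoundaryEdge (F : Finset (Finset (Fin n))) (s : Finset (Fin n)) : Prop :=
  s ∈ F ∧ s.card = 2 ∧ ((faces2 F).filter fun t => s ⊆ t).card = 1

/-- A 1-simplex not on the boundary. -/
def isInteriorEdge (F : Finset (Finset (Fin n))) (s : Finset (Fin n)) : Prop :=
  s ∈ F ∧ s.card = 2 ∧ 2 ≤ ((faces2 F).filter fun t => s ⊆ t).card

/-- An interior vertex: a vertex not contained in any boundary 1-simplex. -/
def isInteriorVertex (F : Finset (Finset (Fin n))) (v : Fin n) : Prop :=
  ({v} : Finset (Fin n)) ∈ F ∧ ∀ s ∈ F, s.card = 2 → v ∈ s → ¬ isBoundaryEdge F s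

/-- The geometric realization of the finite abstract simplicial complex with simplex set `F`,
as a subspace of `Fin n → ℝ`: the convex combinations supported on a simplex. -/
def realization (F : Finset (Finset (Fin n))) : Set (Fin n → ℝ) :=
  {w | (∀ v, 0 ≤ w v) ∧ (∑ v, w v) = 1 ∧ (Finset.univ.filter fun v => w v ≠ 0) ∈ F}

/-- `X` is a wedge of (finitely many) closed disks glued along boundary points: it is covered
by closed subsets each homeomorphic to a closed disk, any two of which meet in at most one
point, and every such common point lies on the boundary circles of the corresponding disks. -/
def IsWedgeOfDisksAlongBoundary (X : Set (Fin n → ℝ)) : Prop :=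
  ∃ (k : ℕ) (D : Fin k → Set X),
    (∀ i, IsClosed (D i)) ∧ (⋃ i, D i) = Set.univ ∧
    (∀ i j, i ≠ j → (D i ∩ D j).Subsingleton) ∧
    (∀ i, ∃ φ : ↥(D i) ≃ₜ ↥(Metric.closedBall (0 : ℝ × ℝ) 1),
      ∀ j, j ≠ i → ∀ x, ∀ hx : x ∈ D i ∩ D j,
        ((φ ⟨x, hx.1⟩ : ℝ × ℝ) ∈ Metric.sphere (0 : ℝ × ℝ) 1))

/-- `(n, F, f)` is a generalized grid polygon:
`F` is a finite (nonempty) abstract simplicial complex of dimension 2, homogeneous,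
equipped with a dimension-preserving simplicial map `f` to the triangular grid, whose
geometric realization is a simply-connected wedge of disks along boundary points, in which
every interior vertex lies in exactly six 2-simplices and every interior 1-simplex lies in
exactly two 2-simplices whose grid images form a diamond (two distinct triangles sharing
the image pane). -/
def IsGGP (n : ℕ) (F : Finset (Finset (Fin n))) (f : Fin n → GridV) : Prop :=
  F.Nonempty ∧
  -- abstract simplicial complex: simplices are nonempty, downward closed
  (∀ s ∈ F, s.Nonempty) ∧
  (∀ s ∈ F, ∀ t, t ⊆ s → t.Nonempty → t ∈ F) ∧
  -- dimension 2, homogeneous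
  (∀ s ∈ F, s.card ≤ 3) ∧
  (∀ s ∈ F, ∃ t ∈ F, t.card = 3 ∧ s ⊆ t) ∧
  -- simplicial map preserving dimensions, sending simplices to grid simplices
  (∀ s ∈ F, (s.image f).card = s.card) ∧
  (∀ s ∈ F, s.card = 2 → IsGridPaneSet (s.image f)) ∧
  (∀ s ∈ F, s.card = 3 → IsGridCellSet (s.image f)) ∧
  -- (1) the geometric realization is a simply-connected wedge of disks along boundary points
  IsWedgeOfDisksAlongBoundary (realization F) ∧
  SimplyConnectedSpace ↥(realization F) ∧
  -- (3) each interior vertex is in exactly six 2-simplices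
  (∀ v : Fin n, isInteriorVertex F v → ((faces2 F).filter fun t => v ∈ t).card = 6) ∧
  -- (4) each interior 1-simplex is in exactly two 2-simplices with distinct grid images
  (∀ s ∈ F, s.card = 2 → ¬ isBoundaryEdge F s →
    ((faces2 F).filter fun t => s ⊆ t).card = 2 ∧
    ∀ t₁ ∈ faces2 F, ∀ t₂ ∈ faces2 F, s ⊆ t₁ → s ⊆ t₂ → t₁ ≠ t₂ → t₁.image f ≠ t₂.image f)

/-- The label of a 1-simplex: `0` if its grid image is horizontal (0° with the positive
x-axis), `1` if at 60°, `2` if at 120°. -/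
def edgeLabel (f : Fin n → GridV) (s : Finset (Fin n)) : ZMod 3 :=
  if ∀ u ∈ s, ∀ v ∈ s, (f u - f v).2 = 0 then 0
  else if ∀ u ∈ s, ∀ v ∈ s, (f u - f v).1 = 0 then 1 else 2

/-- The grid image of the 2-simplex `t` is an upward-pointing triangle (such a triangle has a
unique coordinatewise-least vertex). -/
def isUpFace (f : Fin n → GridV) (t : Finset (Fin n)) : Prop :=
  ∃ v ∈ t, ∀ u ∈ t, f v ≤ f u

/-- The 1-simplex of the 2-simplex `t` through which a beam that entered `t` through the
1-simplex `s` exits: its label is one less (mod 3) than that of `s` if the image of `t` points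
upward, and one more if it points downward. -/
def exitEdge (f : Fin n → GridV) (t s : Finset (Fin n)) : Finset (Fin n) :=
  if h : ∃ s', s' ⊆ t ∧ s'.card = 2 ∧
      edgeLabel f s' = (if isUpFace f t then edgeLabel f s - 1 else edgeLabel f s + 1)
  then h.choose else ∅

/-- The other 2-simplex containing the 1-simplex `s` (besides `t`). -/
def otherFace (F : Finset (Finset (Fin n))) (s t : Finset (Fin n)) : Finset (Fin n) :=
  if h : ∃ t', t' ∈ faces2 F ∧ s ⊆ t' ∧ t' ≠ t then h.choose else t

/-- Some 2-simplex containing the 1-simplex `s` (unique when `s` is a boundary 1-simplex). -/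
def faceOf (F : Finset (Finset (Fin n))) (s : Finset (Fin n)) : Finset (Fin n) :=
  if h : ∃ t, t ∈ faces2 F ∧ s ⊆ t then h.choose else ∅

/-- The boundary 1-simplices. -/
def boundaryEdges (F : Finset (Finset (Fin n))) : Finset (Finset (Fin n)) :=
  F.filter fun s => isBoundaryEdge F s

/-- The perimeter: the number of boundary 1-simplices. -/
def gPerim (F : Finset (Finset (Fin n))) : ℕ := (boundaryEdges F).card

/-- The area: the number of 2-simplices. -/
def gArea (F : Finset (Finset (Fin n))) : ℕ := (faces2 F).card

/-- One step of the billiards process.  A state `(s, t)` records that the beam has just crossed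
(or been emitted from, or reflected at) the 1-simplex `s` heading into the 2-simplex `t`.
The beam exits `t` through `exitEdge f t s`; if that 1-simplex is on the boundary the beam
reflects back into `t`, otherwise it crosses into the other 2-simplex containing it. -/
def gStep (F : Finset (Finset (Fin n))) (f : Fin n → GridV)
    (st : Finset (Fin n) × Finset (Fin n)) : Finset (Fin n) × Finset (Fin n) :=
  let s' := exitEdge f st.2 st.1
  if isBoundaryEdge F s' then (s', st.2) else (s', otherFace F s' st.2)

/-- `gBeamTo F f b b'` : the beam emitted from the boundary 1-simplex `b` next reaches the
boundary at the 1-simplex `b'`. -/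
def gBeamTo (F : Finset (Finset (Fin n))) (f : Fin n → GridV) (b b' : Finset (Fin n)) : Prop :=
  ∃ k : ℕ, 0 < k ∧ isBoundaryEdge F b' ∧ ((gStep F f)^[k] (b, faceOf F b)).1 = b' ∧
    ∀ m : ℕ, 0 < m → m < k → ¬ isBoundaryEdge F (((gStep F f)^[m] (b, faceOf F b)).1)

/-- `π` is the billiards permutation of the generalized grid polygon `(n, F, f)`. -/
def gIsBilliards (F : Finset (Finset (Fin n))) (f : Fin n → GridV)
    (π : Equiv.Perm ↥(boundaryEdges F)) : Prop :=
  ∀ b : ↥(boundaryEdges F), gBeamTo F f b.1 (π b).1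

/-- The orbits (cycles) of a permutation of a finite type, as a finite set of finite sets. -/
def permOrbits {α : Type*} [Fintype α] [DecidableEq α] (π : Equiv.Perm α) :
    Finset (Finset α) :=
  Finset.univ.image fun a => Finset.univ.filter fun b => π.SameCycle a b

/-- The number of cycles of a permutation; for a billiards permutation this is the number of
distinct light-beam trajectories. -/
def cycCount {α : Type*} [Fintype α] [DecidableEq α] (π : Equiv.Perm α) : ℕ :=
  (permOrbits π).card

/-- Two 2-simplices are adjacent when they share a 1-simplex. -/
def dualAdj (F : Finset (Finset (Fin n))) (t t' : Finset (Fin n)) : Prop :=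
  t ≠ t' ∧ ∃ s ∈ F, s.card = 2 ∧ s ⊆ t ∧ s ⊆ t'

/-- The dual adjacency graph on the 2-simplices. -/
def dualGraph (F : Finset (Finset (Fin n))) : SimpleGraph ↥(faces2 F) where
  Adj t t' := dualAdj F t.1 t'.1
  symm := by
    constructor
    rintro a b ⟨hne, s, hs, hc, h1, h2⟩
    exact ⟨hne.symm, s, hs, hc, h2, h1⟩
  loopless := by constructor; rintro a ⟨hne, -⟩; exact hne rfl

/-- The number of components of a generalized grid polygon: since the polygon is a wedge of
disks along boundary points, its (indecomposable) components are exactly the connected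
components of the dual adjacency graph on 2-simplices. -/
def comps (F : Finset (Finset (Fin n))) : ℕ :=
  (Finset.univ.image fun t : ↥(faces2 F) =>
    Finset.univ.filter fun t' => (dualGraph F).Reachable t t').card

/-- The dual adjacency graph with the gluings across the 1-simplex `s₀` removed. -/
def dualGraphAvoid (F : Finset (Finset (Fin n))) (s₀ : Finset (Fin n)) :
    SimpleGraph ↥(faces2 F) where
  Adj t t' := t.1 ≠ t'.1 ∧ ∃ s ∈ F, s ≠ s₀ ∧ s.card = 2 ∧ s ⊆ t.1 ∧ s ⊆ t'.1
  symm := by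
    constructor
    rintro a b ⟨hne, s, hs, hs0, hc, h1, h2⟩
    exact ⟨hne.symm, s, hs, hs0, hc, h2, h1⟩
  loopless := by constructor; rintro a ⟨hne, -⟩; exact hne rfl

/-- Primitivity: no interior 1-simplex disconnects the polygon (cutting along any interior
1-simplex does not change which 2-simplices can reach which). -/
def gPrimitive (F : Finset (Finset (Fin n))) : Prop :=
  ∀ s₀ : Finset (Fin n), isInteriorEdge F s₀ →
    ∀ t t' : ↥(faces2 F),
      (dualGraphAvoid F s₀).Reachable t t' ↔ (dualGraph F).Reachable t t'

/-- The direction, in lattice coordinates, of the clockwise traversal (interior on the right)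
of the edge labeled `i` of an upward grid triangle.  For a downward triangle the direction is
the negative. -/
def cwDirUp (i : ZMod 3) : GridV :=
  if i = 0 then (-1, 0) else if i = 1 then (0, 1) else (1, -1)

/-- The image of a boundary 1-simplex as an oriented pane `(tail, head)` of the grid, oriented
so that the interior of the polygon lies on its right. -/
def orientedPane (F : Finset (Finset (Fin n))) (f : Fin n → GridV) (s : Finset (Fin n)) :
    GridV × GridV :=
  let d : GridV :=
    if isUpFace f (faceOf F s) then cwDirUp (edgeLabel f s) else - cwDirUp (edgeLabel f s)
  if h : ∃ x, x ∈ s.image f ∧ x + d ∈ s.image f then (h.choose, h.choose + d)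
  else ((0, 0), (0, 0))

/-- `e` enumerates the boundary 1-simplices as a loop of panes `(b_1, …, b_N)`: consecutive
oriented panes are head-to-tail (indices mod `N`). -/
def IsBoundaryLoop (F : Finset (Finset (Fin n))) (f : Fin n → GridV) (N : ℕ)
    (e : Fin N ≃ ↥(boundaryEdges F)) : Prop :=
  ∀ i : Fin N,
    (orientedPane F f (e i).1).2 =
      (orientedPane F f (e ⟨(i.1 + 1) % N, Nat.mod_lt _ i.pos⟩).1).1

/-- The beam emitted from the boundary 1-simplex `b` crosses (or reflects at, or is emitted
from) the 1-simplex `s` at some time. -/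
def Crosses (F : Finset (Finset (Fin n))) (f : Fin n → GridV) (b s : Finset (Fin n)) : Prop :=
  ∃ k : ℕ, ((gStep F f)^[k] (b, faceOf F b)).1 = s

/-- The graph distance between two vertices of the triangular grid. -/
def gridDist (u v : GridV) : ℕ :=
  max (max (u.1 - v.1).natAbs (u.2 - v.2).natAbs) ((u.1 - v.1) + (u.2 - v.2)).natAbs

/-- The set of 1-simplices traversed by a combinatorial path `p` of vertices. -/
def cutPathEdges (ℓ : ℕ) (p : Fin (ℓ + 1) → Fin n) : Finset (Finset (Fin n)) :=
  Finset.univ.image fun i : Fin ℓ => ({p i.castSucc, p i.succ} : Finset (Fin n))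

/-- `p` is an interior path whose grid image is a *shortest* grid path and each of whose
1-simplices is crossed only by the beams of the cycles constituting `B`. -/
def IsCutPath (F : Finset (Finset (Fin n))) (f : Fin n → GridV)
    (B : Finset ↥(boundaryEdges F)) (ℓ : ℕ) (p : Fin (ℓ + 1) → Fin n) : Prop :=
  Function.Injective p ∧
  (∀ i : Fin ℓ, isInteriorEdge F ({p i.castSucc, p i.succ} : Finset (Fin n))) ∧
  (∀ i : Fin ℓ, ∀ b : ↥(boundaryEdges F),
    Crosses F f b.1 ({p i.castSucc, p i.succ} : Finset (Fin n)) → b ∈ B) ∧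
  ℓ = gridDist (f (p 0)) (f (p (Fin.last ℓ)))

/-!
Follow a beam by the doubled midpoint `∑ u ∈ s, f u` of the 1-simplex `s` it last crossed.
Inside a grid triangle the billiards rule moves this point by `cwDirUp d`, and the direction
index `d = beamDir f (s, t)` is unchanged when the beam crosses an interior 1-simplex, because the
two triangles of a diamond point in opposite directions. So between two boundary hits the beam
moves along a straight line, and at a reflection `d` changes. A fixed point of the billiards
permutation would give `k • cwDirUp d = 0` with `k > 0`, and a 2-cycle would give
`k • cwDirUp d + k' • cwDirUp d' = 0` with `k, k' > 0` and `d ≠ d'`; neither can happen for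
the three directions `(-1, 0)`, `(0, 1)`, `(1, -1)`.
-/

lemma Finset.eq_triple_of_image_eq {α β : Type*} [DecidableEq α] [DecidableEq β] {g : α → β}
    {t : Finset α} {a b c : β} (h : t.image g = {a, b, c})
    (hcard : t.card ≤ ({a, b, c} : Finset β).card) :
    ∃ x y z, t = {x, y, z} ∧ g x = a ∧ g y = b ∧ g z = c := by
  have hmem : ∀ p ∈ ({a, b, c} : Finset β), ∃ x ∈ t, g x = p := fun p hp =>
    Finset.mem_image.mp (h ▸ hp)
  obtain ⟨x, hx, rfl⟩ := hmem a (by simp)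
  obtain ⟨y, hy, rfl⟩ := hmem b (by simp)
  obtain ⟨z, hz, rfl⟩ := hmem c (by simp)
  refine ⟨x, y, z, (Finset.eq_of_subset_of_card_le ?_ ?_).symm, rfl, rfl, rfl⟩
  · simp [Finset.insert_subset_iff, hx, hy, hz]
  · calc t.card ≤ (({x, y, z} : Finset α).image g).card := by simpa [Finset.image_insert]
      _ ≤ _ := Finset.card_image_le

lemma Finset.eq_or_eq_or_eq_of_subset_triple {α : Type*} [DecidableEq α] {x y z : α}
    {s : Finset α} (hs : s ⊆ {x, y, z}) (h2 : s.card = 2) :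
    s = {x, y} ∨ s = {x, z} ∨ s = {y, z} := by
  obtain ⟨a, b, hab, rfl⟩ := Finset.card_eq_two.mp h2
  simp only [Finset.insert_subset_iff, Finset.singleton_subset_iff, Finset.mem_insert,
    Finset.mem_singleton] at hs
  obtain ⟨ha | ha | ha, hb | hb | hb⟩ := hs <;> subst ha hb <;>
    simp_all [Finset.pair_comm]

lemma ZMod.three_cases (A : ZMod 3) : A = 0 ∨ A = 1 ∨ A = 2 := by decide +revert

def paneLabel (d : GridV) : ZMod 3 :=
  if d.2 = 0 then 0 else if d.1 = 0 then 1 else 2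

lemma edgeLabel_pair (f : Fin n → GridV) (x y : Fin n) :
    edgeLabel f {x, y} = paneLabel (f x - f y) := by
  unfold edgeLabel paneLabel
  simp only [Finset.mem_insert, Finset.mem_singleton, forall_eq_or_imp, forall_eq, sub_self,
    Prod.fst_sub, Prod.snd_sub, true_and, and_true]
  split_ifs <;> first | rfl | (exfalso; omega)

lemma GCell.exists_least_iff (c : GCell) :
    (∃ p ∈ c.vertexSet, ∀ q ∈ c.vertexSet, p ≤ q) ↔ c.up = true := by
  obtain ⟨v, _ | _⟩ := c <;> simp [GCell.vertexSet, Prod.le_def]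

lemma GCell.eq_of_up_eq_of_subset {c c' : GCell} (hup : c.up = c'.up) {P : Finset GridV}
    (hP : P.card = 2) (h : P ⊆ c.vertexSet) (h' : P ⊆ c'.vertexSet) : c = c' := by
  obtain ⟨p, q, hpq, rfl⟩ := Finset.card_eq_two.mp hP
  obtain ⟨v, u⟩ := c
  obtain ⟨v', u'⟩ := c'
  obtain rfl : u = u' := hup
  simp only [Finset.insert_subset_iff, Finset.singleton_subset_iff] at h h'
  rw [Ne, Prod.ext_iff] at hpq
  simp only [GCell.mk.injEq, and_true]
  rw [Prod.ext_iff]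
  cases u <;> simp [GCell.vertexSet, Prod.ext_iff] at h h' <;> omega

lemma nsmul_cwDirUp_ne_zero {k : ℕ} (hk : 0 < k) (A : ZMod 3) : k • cwDirUp A ≠ 0 := by
  rcases A.three_cases with rfl | rfl | rfl <;> simp +decide [cwDirUp, Prod.ext_iff] <;> omega

lemma nsmul_cwDirUp_add_nsmul_ne_zero {k k' : ℕ} (hk : 0 < k) (hk' : 0 < k') {A B : ZMod 3}
    (hAB : A ≠ B) : k • cwDirUp A + k' • cwDirUp B ≠ 0 := by
  rcases A.three_cases with rfl | rfl | rfl <;> rcases B.three_cases with rfl | rfl | rfl <;>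
    simp +decide [cwDirUp, Prod.ext_iff] at hAB ⊢ <;> omega

def IsFlag (F : Finset (Finset (Fin n))) (st : Finset (Fin n) × Finset (Fin n)) : Prop :=
  st.2 ∈ faces2 F ∧ st.1 ⊆ st.2 ∧ st.1.card = 2

def beamDir (f : Fin n → GridV) (st : Finset (Fin n) × Finset (Fin n)) : ZMod 3 :=
  edgeLabel f st.1 + if isUpFace f st.2 then 1 else 2

section Polygon

variable {F : Finset (Finset (Fin n))} {f : Fin n → GridV}

lemma IsGGP.mem_of_subset (hP : IsGGP n F f) {s t : Finset (Fin n)} (ht : t ∈ F) (hst : s ⊆ t)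
    (hs : s.Nonempty) : s ∈ F :=
  hP.2.2.1 t ht s hst hs

lemma IsGGP.card_image (hP : IsGGP n F f) {s : Finset (Fin n)} (hs : s ∈ F) :
    (s.image f).card = s.card :=
  hP.2.2.2.2.2.1 s hs

lemma IsGGP.isGridCellSet (hP : IsGGP n F f) {t : Finset (Fin n)} (ht : t ∈ faces2 F) :
    IsGridCellSet (t.image f) :=
  hP.2.2.2.2.2.2.2.1 t (Finset.mem_filter.mp ht).1 (Finset.mem_filter.mp ht).2

lemma IsGGP.diamond (hP : IsGGP n F f) {s : Finset (Fin n)} (hs : s ∈ F) (hs2 : s.card = 2)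
    (hnb : ¬ isBoundaryEdge F s) :
    ((faces2 F).filter fun t => s ⊆ t).card = 2 ∧
      ∀ t₁ ∈ faces2 F, ∀ t₂ ∈ faces2 F, s ⊆ t₁ → s ⊆ t₂ → t₁ ≠ t₂ →
        t₁.image f ≠ t₂.image f :=
  hP.2.2.2.2.2.2.2.2.2.2.2 s hs hs2 hnb

lemma isUpFace_iff_exists_least_image {t : Finset (Fin n)} :
    isUpFace f t ↔ ∃ p ∈ t.image f, ∀ q ∈ t.image f, p ≤ q := by
  simp [isUpFace]

lemma IsGGP.exists_cell (hP : IsGGP n F f) {t : Finset (Fin n)} (ht : t ∈ faces2 F) :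
    ∃ c : GCell, t.image f = c.vertexSet ∧ (isUpFace f t ↔ c.up = true) := by
  obtain ⟨c, hc⟩ := hP.isGridCellSet ht
  exact ⟨c, hc, by rw [isUpFace_iff_exists_least_image, hc, c.exists_least_iff]⟩

lemma IsGGP.exists_face_vertices (hP : IsGGP n F f) {t : Finset (Fin n)} (ht : t ∈ faces2 F) :
    ∃ (x y z : Fin n) (v : GridV), t = {x, y, z} ∧
      (isUpFace f t ∧ f x = v ∧ f y = v + (1, 0) ∧ f z = v + (0, 1) ∨
        ¬ isUpFace f t ∧ f x = v + (1, 0) ∧ f y = v + (0, 1) ∧ f z = v + (1, 1)) := by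
  obtain ⟨⟨v, up⟩, hc, hup⟩ := hP.exists_cell ht
  have hcard : t.card ≤ (GCell.vertexSet ⟨v, up⟩).card := by
    rw [← hc, hP.card_image (Finset.mem_filter.mp ht).1]
  cases up <;> simp only [GCell.vertexSet, Bool.false_eq_true, if_true, if_false] at hc hcard
  · obtain ⟨x, y, z, rfl, hx, hy, hz⟩ := Finset.eq_triple_of_image_eq hc hcard
    exact ⟨x, y, z, v, rfl, Or.inr ⟨by simpa using hup, hx, hy, hz⟩⟩
  · obtain ⟨x, y, z, rfl, hx, hy, hz⟩ := Finset.eq_triple_of_image_eq hc hcard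
    exact ⟨x, y, z, v, rfl, Or.inl ⟨by simpa using hup, hx, hy, hz⟩⟩

lemma IsGGP.exists_exit (hP : IsGGP n F f) {s t : Finset (Fin n)} (h : IsFlag F (s, t)) :
    ∃ s' ⊆ t, s'.card = 2 ∧
      edgeLabel f s' = (if isUpFace f t then edgeLabel f s - 1 else edgeLabel f s + 1) ∧
      ∑ u ∈ s', f u = ∑ u ∈ s, f u + cwDirUp (beamDir f (s, t)) := by
  obtain ⟨ht, hst, hs⟩ : t ∈ faces2 F ∧ s ⊆ t ∧ s.card = 2 := h
  obtain ⟨x, y, z, v, rfl, hcase⟩ := hP.exists_face_vertices ht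
  -- with this naming of the vertices the exit edge is the same for both orientations
  rcases hcase with ⟨hup, hx, hy, hz⟩ | ⟨hup, hx, hy, hz⟩ <;>
  · have hxy : x ≠ y := by rintro rfl; simp_all [Prod.ext_iff]
    have hxz : x ≠ z := by rintro rfl; simp_all [Prod.ext_iff]
    have hyz : y ≠ z := by rintro rfl; simp_all [Prod.ext_iff]
    rcases Finset.eq_or_eq_or_eq_of_subset_triple hst hs with rfl | rfl | rfl <;>
      [refine ⟨{y, z}, by simp, ?_⟩; refine ⟨{x, y}, by simp, ?_⟩;
        refine ⟨{x, z}, by simp, ?_⟩] <;>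
    · simp +decide [hxy, hxz, hyz, edgeLabel_pair, hx, hy, hz, beamDir, hup, paneLabel,
        cwDirUp, Prod.ext_iff]
      omega

lemma IsGGP.eq_of_edgeLabel_eq (hP : IsGGP n F f) {t s₁ s₂ : Finset (Fin n)}
    (ht : t ∈ faces2 F) (h₁ : s₁ ⊆ t) (hc₁ : s₁.card = 2) (h₂ : s₂ ⊆ t) (hc₂ : s₂.card = 2)
    (hl : edgeLabel f s₁ = edgeLabel f s₂) : s₁ = s₂ := by
  obtain ⟨x, y, z, v, rfl, hcase⟩ := hP.exists_face_vertices ht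
  rcases hcase with ⟨-, hx, hy, hz⟩ | ⟨-, hx, hy, hz⟩ <;>
  · rcases Finset.eq_or_eq_or_eq_of_subset_triple h₁ hc₁ with rfl | rfl | rfl <;>
    rcases Finset.eq_or_eq_or_eq_of_subset_triple h₂ hc₂ with rfl | rfl | rfl <;>
    first | rfl | simp +decide [edgeLabel_pair, hx, hy, hz, paneLabel] at hl

lemma exitEdge_spec {t s : Finset (Fin n)}
    (h : ∃ s', s' ⊆ t ∧ s'.card = 2 ∧
      edgeLabel f s' = (if isUpFace f t then edgeLabel f s - 1 else edgeLabel f s + 1)) :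
    exitEdge f t s ⊆ t ∧ (exitEdge f t s).card = 2 ∧
      edgeLabel f (exitEdge f t s) =
        (if isUpFace f t then edgeLabel f s - 1 else edgeLabel f s + 1) := by
  rw [exitEdge, dif_pos h]
  exact h.choose_spec

lemma IsGGP.exitEdge_flag (hP : IsGGP n F f) {s t : Finset (Fin n)} (h : IsFlag F (s, t)) :
    IsFlag F (exitEdge f t s, t) ∧
      edgeLabel f (exitEdge f t s) =
        (if isUpFace f t then edgeLabel f s - 1 else edgeLabel f s + 1) ∧
      ∑ u ∈ exitEdge f t s, f u = ∑ u ∈ s, f u + cwDirUp (beamDir f (s, t)) := by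
  obtain ⟨s', hs't, hs'2, hl, hsum⟩ := hP.exists_exit h
  obtain ⟨het, he2, hel⟩ := exitEdge_spec ⟨s', hs't, hs'2, hl⟩
  obtain rfl : exitEdge f t s = s' :=
    hP.eq_of_edgeLabel_eq h.1 het he2 hs't hs'2 (hel.trans hl.symm)
  exact ⟨⟨h.1, het, he2⟩, hel, hsum⟩

lemma IsGGP.otherFace_spec (hP : IsGGP n F f) {s t : Finset (Fin n)} (hs : s ∈ F)
    (hs2 : s.card = 2) (hnb : ¬ isBoundaryEdge F s) :
    otherFace F s t ∈ faces2 F ∧ s ⊆ otherFace F s t ∧ otherFace F s t ≠ t := by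
  have hcard := (hP.diamond hs hs2 hnb).1
  obtain ⟨t', ht', hne⟩ := Finset.exists_mem_ne (s := (faces2 F).filter (s ⊆ ·))
    (by omega) t
  obtain ⟨ht'F, hst'⟩ := Finset.mem_filter.mp ht'
  have hex : ∃ t', t' ∈ faces2 F ∧ s ⊆ t' ∧ t' ≠ t := ⟨t', ht'F, hst', hne⟩
  rw [otherFace, dif_pos hex]
  exact hex.choose_spec

lemma IsGGP.isUpFace_iff_not_of_image_ne (hP : IsGGP n F f) {s t₁ t₂ : Finset (Fin n)}
    (h₁ : t₁ ∈ faces2 F) (h₂ : t₂ ∈ faces2 F) (hs₁ : s ⊆ t₁) (hs₂ : s ⊆ t₂) (hs2 : s.card = 2)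
    (hne : t₁.image f ≠ t₂.image f) : isUpFace f t₁ ↔ ¬ isUpFace f t₂ := by
  obtain ⟨c₁, hc₁, hup₁⟩ := hP.exists_cell h₁
  obtain ⟨c₂, hc₂, hup₂⟩ := hP.exists_cell h₂
  have hsF : s ∈ F :=
    hP.mem_of_subset (Finset.mem_filter.mp h₁).1 hs₁ (Finset.card_pos.mp (by omega))
  by_contra hsame
  have hup : c₁.up = c₂.up := by rw [Bool.eq_iff_iff, ← hup₁, ← hup₂]; tauto
  have hc : c₁ = c₂ := GCell.eq_of_up_eq_of_subset hup ((hP.card_image hsF).trans hs2)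
    (hc₁ ▸ Finset.image_subset_image hs₁) (hc₂ ▸ Finset.image_subset_image hs₂)
  exact hne (by rw [hc₁, hc₂, hc])

lemma IsGGP.isUpFace_otherFace (hP : IsGGP n F f) {s t : Finset (Fin n)} (hs : s ∈ F)
    (hs2 : s.card = 2) (hnb : ¬ isBoundaryEdge F s) (ht : t ∈ faces2 F) (hst : s ⊆ t) :
    isUpFace f (otherFace F s t) ↔ ¬ isUpFace f t := by
  obtain ⟨ho, hso, hne⟩ := hP.otherFace_spec (t := t) hs hs2 hnb
  exact hP.isUpFace_iff_not_of_image_ne ho ht hso hst hs2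
    ((hP.diamond hs hs2 hnb).2 _ ho t ht hso hst hne)

lemma faceOf_of_isBoundaryEdge {s t : Finset (Fin n)}
    (hb : isBoundaryEdge F s) (ht : t ∈ faces2 F) (hst : s ⊆ t) : faceOf F s = t := by
  obtain ⟨u, hu⟩ := Finset.card_eq_one.mp hb.2.2
  have hex : ∃ t', t' ∈ faces2 F ∧ s ⊆ t' := ⟨t, ht, hst⟩
  have hmem : ∀ t' ∈ faces2 F, s ⊆ t' → t' = u := fun t' h h' => by
    simpa [hu] using Finset.mem_filter.mpr ⟨h, h'⟩
  rw [faceOf, dif_pos hex, hmem _ hex.choose_spec.1 hex.choose_spec.2, hmem t ht hst]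

lemma isFlag_faceOf {b : Finset (Fin n)}
    (hb : isBoundaryEdge F b) : IsFlag F (b, faceOf F b) := by
  obtain ⟨t, ht⟩ := Finset.card_pos.mp (hb.2.2.symm ▸ Nat.one_pos)
  obtain ⟨htF, hbt⟩ := Finset.mem_filter.mp ht
  rw [faceOf_of_isBoundaryEdge hb htF hbt]
  exact ⟨htF, hbt, hb.2.1⟩

lemma gStep_fst (st : Finset (Fin n) × Finset (Fin n)) :
    (gStep F f st).1 = exitEdge f st.2 st.1 := by
  simp only [gStep]
  split <;> rfl

lemma IsGGP.sum_gStep (hP : IsGGP n F f) {st : Finset (Fin n) × Finset (Fin n)}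
    (h : IsFlag F st) :
    ∑ u ∈ (gStep F f st).1, f u = ∑ u ∈ st.1, f u + cwDirUp (beamDir f st) := by
  rw [gStep_fst]
  exact (hP.exitEdge_flag h).2.2

lemma IsGGP.gStep_of_not_isBoundaryEdge (hP : IsGGP n F f)
    {st : Finset (Fin n) × Finset (Fin n)} (h : IsFlag F st)
    (hnb : ¬ isBoundaryEdge F (gStep F f st).1) :
    IsFlag F (gStep F f st) ∧ beamDir f (gStep F f st) = beamDir f st := by
  obtain ⟨s, t⟩ := st
  obtain ⟨⟨ht, hs't, hs'2⟩, hlabel, -⟩ := hP.exitEdge_flag h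
  rw [gStep_fst] at hnb
  have hs'F : exitEdge f t s ∈ F :=
    hP.mem_of_subset (Finset.mem_filter.mp ht).1 hs't (Finset.card_pos.mp (by simp [hs'2]))
  obtain ⟨ho, hso, -⟩ := hP.otherFace_spec (t := t) hs'F hs'2 hnb
  have hflip := hP.isUpFace_otherFace hs'F hs'2 hnb ht hs't
  simp only [gStep, if_neg hnb]
  refine ⟨⟨ho, hso, hs'2⟩, ?_⟩
  unfold beamDir
  by_cases hup : isUpFace f t <;> simp_all <;> ring

lemma IsGGP.beamDir_ne_of_isBoundaryEdge (hP : IsGGP n F f)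
    {st : Finset (Fin n) × Finset (Fin n)} (h : IsFlag F st)
    (hb : isBoundaryEdge F (gStep F f st).1) :
    beamDir f ((gStep F f st).1, faceOf F (gStep F f st).1) ≠ beamDir f st := by
  obtain ⟨s, t⟩ := st
  obtain ⟨⟨ht, hs't, -⟩, hlabel, -⟩ := hP.exitEdge_flag h
  rw [gStep_fst] at hb ⊢
  rw [beamDir, beamDir, faceOf_of_isBoundaryEdge hb ht hs't, hlabel]
  by_cases hup : isUpFace f t <;> simp [hup]

lemma IsGGP.iterate_gStep (hP : IsGGP n F f) {st : Finset (Fin n) × Finset (Fin n)}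
    (h : IsFlag F st) (m : ℕ)
    (hnb : ∀ j, 0 < j → j ≤ m → ¬ isBoundaryEdge F ((gStep F f)^[j] st).1) :
    IsFlag F ((gStep F f)^[m] st) ∧ beamDir f ((gStep F f)^[m] st) = beamDir f st ∧
      ∑ u ∈ ((gStep F f)^[m] st).1, f u = ∑ u ∈ st.1, f u + m • cwDirUp (beamDir f st) := by
  induction m with
  | zero => simp [h]
  | succ m ih =>
    obtain ⟨hflag, hdir, hsum⟩ := ih fun j hj hjm => hnb j hj (by omega)
    have hnb' := hnb (m + 1) m.succ_pos le_rfl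
    rw [Function.iterate_succ_apply'] at hnb' ⊢
    obtain ⟨hflag', hdir'⟩ := hP.gStep_of_not_isBoundaryEdge hflag hnb'
    refine ⟨hflag', hdir'.trans hdir, ?_⟩
    rw [hP.sum_gStep hflag, hsum, hdir, succ_nsmul, add_assoc]

lemma IsGGP.exists_of_gBeamTo (hP : IsGGP n F f) {b b' : Finset (Fin n)}
    (hb : isBoundaryEdge F b) (h : gBeamTo F f b b') :
    ∃ k, 0 < k ∧
      ∑ u ∈ b', f u = ∑ u ∈ b, f u + k • cwDirUp (beamDir f (b, faceOf F b)) ∧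
      beamDir f (b', faceOf F b') ≠ beamDir f (b, faceOf F b) := by
  obtain ⟨k, hk, hb', rfl, hmin⟩ := h
  obtain ⟨m, rfl⟩ : ∃ m, k = m + 1 := ⟨k - 1, by omega⟩
  obtain ⟨hflag, hdir, hsum⟩ :=
    hP.iterate_gStep (isFlag_faceOf hb) m fun j hj hjm => hmin j hj (by omega)
  rw [Function.iterate_succ_apply'] at hb' ⊢
  refine ⟨m + 1, m.succ_pos, ?_, ?_⟩
  · rw [hP.sum_gStep hflag, hsum, hdir, succ_nsmul, add_assoc]
  · exact hdir ▸ hP.beamDir_ne_of_isBoundaryEdge hflag hb'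

end Polygon

/-- **Theorem.**  The billiards permutation of a generalized grid polygon has no fixed points
and no 2-cycles: every cycle has length at least 3. -/
theorem billiards_no_short_cycles
    (n : ℕ) (F : Finset (Finset (Fin n))) (f : Fin n → GridV) (hP : IsGGP n F f)
    (π : Equiv.Perm ↥(boundaryEdges F)) (hπ : gIsBilliards F f π)
    (b : ↥(boundaryEdges F)) :
    π b ≠ b ∧ π (π b) ≠ b := by
  have hbd : ∀ c : ↥(boundaryEdges F), isBoundaryEdge F c.1 := fun c =>
    (Finset.mem_filter.mp c.2).2
  obtain ⟨k, hk, hsum, hdir⟩ := hP.exists_of_gBeamTo (hbd b) (hπ b)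
  refine ⟨fun hfix => ?_, fun h2 => ?_⟩
  · rw [hfix] at hsum
    exact nsmul_cwDirUp_ne_zero hk _ (left_eq_add.mp hsum)
  · obtain ⟨k', hk', hsum', -⟩ := hP.exists_of_gBeamTo (hbd (π b)) (hπ (π b))
    rw [h2, hsum, add_assoc] at hsum'
    exact nsmul_cwDirUp_add_nsmul_ne_zero hk hk' hdir.symm (left_eq_add.mp hsum')

end
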